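/- Let ω > 0 and M > 0. Then there exist A₀ > 0 and r₁, r₂ > 0 such that for every real α₀ with 0 < |α₀| < A₀: (i) the map 𝓝 defined by (𝓝ρ)(p) := α₀ h(p)/(1 + α₀ h(p) ρ(p + iω)) maps the closed ball {ρ : ‖ρ‖_∞ ≤ M} of the Banach space of bounded continuous complex-valued functions on J_{r₁} := {p ∈ ℂ : Im(p) ≥ r₁, Re(p) ∈ [0,1]} into itself and is a contraction there, hence has a unique fixed point in that ball, and the fixed point is analytic on the interior of J_{r₁}; (ii) similarly, the map 𝓜 defined by (𝓜Ω)(p) := −α₀ h(p − iω)/(1 − α₀ h(p − iω) Ω(p − iω)) maps the closed ball {Ω : ‖Ω‖_∞ ≤ M} of the bounded continuous functions on K_{r₂} := {p ∈ ℂ : Im(p) ≤ −r₂, Re(p) ∈ [0,1]} into itself and is a contraction there, hence has a unique fixed point in that ball, and the fixed point is analytic on the interior of K_{r₂}. -/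

import Mathlib

open MeasureTheory

/-- `β₀ := (γ - log 2)/(2π) - i/8`, with `γ` the Euler–Mascheroni constant. -/
noncomputable def beta0 : ℂ :=
  (((Real.eulerMascheroniConstant - Real.log 2) / (2 * Real.pi) : ℝ) : ℂ) - Complex.I / 8

/-- `h(z) := 2πi / (log z + 4πβ₀)`, with the principal branch of the complex logarithm. -/
noncomputable def hfun (z : ℂ) : ℂ :=
  2 * (Real.pi : ℂ) * Complex.I / (Complex.log z + 4 * (Real.pi : ℂ) * beta0)

/-- `J_r := {p ∈ ℂ : Im p ≥ r, Re p ∈ [0,1]}`. -/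
def Jset (r : ℝ) : Set ℂ := {p : ℂ | r ≤ p.im ∧ p.re ∈ Set.Icc 0 1}

/-- `K_r := {p ∈ ℂ : Im p ≤ -r, Re p ∈ [0,1]}`. -/
def Kset (r : ℝ) : Set ℂ := {p : ℂ | p.im ≤ -r ∧ p.re ∈ Set.Icc 0 1}

/-- `(𝓝ρ)(p) := α₀ h(p) / (1 + α₀ h(p) ρ(p+iω))`. -/
noncomputable def Nmap (α₀ ω : ℝ) (ρ : ℂ → ℂ) (p : ℂ) : ℂ :=
  (α₀ : ℂ) * hfun p / (1 + (α₀ : ℂ) * hfun p * ρ (p + Complex.I * (ω : ℂ)))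

/-- `(𝓜Ω)(p) := -α₀ h(p-iω) / (1 - α₀ h(p-iω) Ω(p-iω))`. -/
noncomputable def Mmap (α₀ ω : ℝ) (Ω : ℂ → ℂ) (p : ℂ) : ℂ :=
  -((α₀ : ℂ) * hfun (p - Complex.I * (ω : ℂ))) /
    (1 - (α₀ : ℂ) * hfun (p - Complex.I * (ω : ℂ)) * Ω (p - Complex.I * (ω : ℂ)))

/-! Both maps have the form `ρ ↦ g / (1 + g · ρ ∘ σ)`, with `σ` a vertical shift preserving the
half-strip and `‖g‖ ≤ ε := 2π|α₀|`, because `|log p + 4πβ₀| ≥ 1` far enough from the real axis.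
If `εM < 1/2` the denominators stay above `1/2`, so the map sends the `M`-ball into itself and
is a `4ε²`-contraction for the sup norm. The Picard iterates starting from `0` are continuous on
the strip and analytic in its interior and converge uniformly, so the fixed point is continuous
and, by Weierstrass' theorem, analytic. -/

open Complex Filter Topology Set

structure IsBallContraction {α E : Type*} [NormedAddCommGroup E] (S : Set α) (M K : ℝ)
    (T : (α → E) → α → E) : Prop where
  norm_le : ∀ ρ, (∀ p ∈ S, ‖ρ p‖ ≤ M) → ∀ p ∈ S, ‖T ρ p‖ ≤ M
  norm_sub_le : ∀ ρ₁ ρ₂, (∀ p ∈ S, ‖ρ₁ p‖ ≤ M) → (∀ p ∈ S, ‖ρ₂ p‖ ≤ M) →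
    ∀ d : ℝ, (∀ p ∈ S, ‖ρ₁ p - ρ₂ p‖ ≤ d) → ∀ p ∈ S, ‖T ρ₁ p - T ρ₂ p‖ ≤ K * d

namespace IsBallContraction

variable {α E : Type*} [NormedAddCommGroup E] {S : Set α} {M K : ℝ} {T : (α → E) → α → E}

theorem norm_iterate_le (hT : IsBallContraction S M K T) {ρ : α → E}
    (hρ : ∀ p ∈ S, ‖ρ p‖ ≤ M) (n : ℕ) : ∀ p ∈ S, ‖T^[n] ρ p‖ ≤ M := by
  induction n with
  | zero => exact hρ
  | succ n ih => rw [Function.iterate_succ_apply']; exact hT.norm_le _ ih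

theorem norm_iterate_sub_iterate_le (hT : IsBallContraction S M K T) {ρ₁ ρ₂ : α → E}
    (hρ₁ : ∀ p ∈ S, ‖ρ₁ p‖ ≤ M) (hρ₂ : ∀ p ∈ S, ‖ρ₂ p‖ ≤ M) {d : ℝ}
    (hd : ∀ p ∈ S, ‖ρ₁ p - ρ₂ p‖ ≤ d) (n : ℕ) :
    ∀ p ∈ S, ‖T^[n] ρ₁ p - T^[n] ρ₂ p‖ ≤ K ^ n * d := by
  induction n with
  | zero => simpa using hd
  | succ n ih =>
    simp only [Function.iterate_succ_apply', pow_succ', mul_assoc]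
    exact hT.norm_sub_le _ _ (hT.norm_iterate_le hρ₁ n) (hT.norm_iterate_le hρ₂ n) _ ih

theorem eqOn_of_fixed (hT : IsBallContraction S M K T) (hK₀ : 0 ≤ K) (hK₁ : K < 1)
    {ρ₁ ρ₂ : α → E} (hρ₁ : ∀ p ∈ S, ‖ρ₁ p‖ ≤ M) (hρ₂ : ∀ p ∈ S, ‖ρ₂ p‖ ≤ M)
    (hfix₁ : ∀ p ∈ S, T ρ₁ p = ρ₁ p) (hfix₂ : ∀ p ∈ S, T ρ₂ p = ρ₂ p) : EqOn ρ₁ ρ₂ S := by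
  have hdist : ∀ n : ℕ, ∀ p ∈ S, ‖ρ₁ p - ρ₂ p‖ ≤ K ^ n * (2 * M) := by
    intro n
    induction n with
    | zero =>
      intro p hp
      linarith [_root_.norm_sub_le (ρ₁ p) (ρ₂ p), hρ₁ p hp, hρ₂ p hp]
    | succ n ih =>
      intro p hp
      rw [← hfix₁ p hp, ← hfix₂ p hp, pow_succ', mul_assoc]
      exact hT.norm_sub_le _ _ hρ₁ hρ₂ _ ih p hp
  intro p hp
  have hlim : Tendsto (fun n : ℕ => K ^ n * (2 * M)) atTop (𝓝 0) := by
    simpa using (tendsto_pow_atTop_nhds_zero_of_lt_one hK₀ hK₁).mul_const (2 * M)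
  have := ge_of_tendsto' hlim fun n => hdist n p hp
  exact sub_eq_zero.1 (norm_le_zero_iff.1 this)

theorem exists_tendstoUniformlyOn_iterate [CompleteSpace E] (hT : IsBallContraction S M K T)
    (hK₀ : 0 ≤ K) (hK₁ : K < 1) {ρ₀ : α → E} (hρ₀ : ∀ p ∈ S, ‖ρ₀ p‖ ≤ M) :
    ∃ ρ, TendstoUniformlyOn (fun n => T^[n] ρ₀) ρ atTop S := by
  have hstep : ∀ p ∈ S, ∀ n, dist (T^[n] ρ₀ p) (T^[n + 1] ρ₀ p) ≤ 2 * M * K ^ n := by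
    intro p hp n
    have hd : ∀ q ∈ S, ‖ρ₀ q - T ρ₀ q‖ ≤ 2 * M := fun q hq => by
      linarith [_root_.norm_sub_le (ρ₀ q) (T ρ₀ q), hρ₀ q hq, hT.norm_le _ hρ₀ q hq]
    rw [dist_eq_norm, Function.iterate_succ_apply, mul_comm]
    exact hT.norm_iterate_sub_iterate_le hρ₀ (hT.norm_le _ hρ₀) hd n p hp
  choose! ρ hρ using fun p (hp : p ∈ S) =>
    cauchySeq_tendsto_of_complete (cauchySeq_of_le_geometric K (2 * M) hK₁ (hstep p hp))
  refine ⟨ρ, Metric.tendstoUniformlyOn_iff.2 fun δ hδ => ?_⟩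
  have hlim : Tendsto (fun n : ℕ => 2 * M * K ^ n / (1 - K)) atTop (𝓝 0) := by
    simpa using ((tendsto_pow_atTop_nhds_zero_of_lt_one hK₀ hK₁).const_mul (2 * M)).div_const
      (1 - K)
  filter_upwards [hlim.eventually (gt_mem_nhds hδ)] with n hn p hp
  rw [dist_comm]
  exact (dist_le_of_le_geometric_of_tendsto K (2 * M) hK₁ (hstep p hp) (hρ p hp) n).trans_lt hn

theorem norm_le_of_tendstoUniformlyOn (hT : IsBallContraction S M K T) {ρ₀ ρ : α → E}
    (hρ₀ : ∀ p ∈ S, ‖ρ₀ p‖ ≤ M) (hlim : TendstoUniformlyOn (fun n => T^[n] ρ₀) ρ atTop S) :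
    ∀ p ∈ S, ‖ρ p‖ ≤ M := fun p hp =>
  le_of_tendsto' ((hlim.tendsto_at hp).norm) fun n => hT.norm_iterate_le hρ₀ n p hp

theorem fixed_of_tendstoUniformlyOn (hT : IsBallContraction S M K T) (hK₁ : K < 1)
    {ρ₀ ρ : α → E} (hρ₀ : ∀ p ∈ S, ‖ρ₀ p‖ ≤ M)
    (hlim : TendstoUniformlyOn (fun n => T^[n] ρ₀) ρ atTop S) : ∀ p ∈ S, T ρ p = ρ p := by
  intro p hp
  have hρ := hT.norm_le_of_tendstoUniformlyOn hρ₀ hlim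
  have hT_lim : Tendsto (fun n => T (T^[n] ρ₀) p) atTop (𝓝 (T ρ p)) := by
    refine Metric.tendsto_nhds.2 fun δ hδ => ?_
    filter_upwards [Metric.tendstoUniformlyOn_iff.1 hlim δ hδ] with n hn
    have hd : ∀ q ∈ S, ‖T^[n] ρ₀ q - ρ q‖ ≤ δ := fun q hq => by
      rw [← dist_eq_norm, dist_comm]; exact (hn q hq).le
    rw [dist_eq_norm]
    calc ‖T (T^[n] ρ₀) p - T ρ p‖ ≤ K * δ :=
          hT.norm_sub_le _ _ (hT.norm_iterate_le hρ₀ n) hρ δ hd p hp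
      _ < δ := by nlinarith
  have h_lim : Tendsto (fun n => T (T^[n] ρ₀) p) atTop (𝓝 (ρ p)) := by
    refine ((hlim.tendsto_at hp).comp (tendsto_add_atTop_nat 1)).congr fun n => ?_
    exact congrFun (Function.iterate_succ_apply' T n ρ₀) p
  exact tendsto_nhds_unique hT_lim h_lim

end IsBallContraction

def contFracStep {α 𝕜 : Type*} [DivisionRing 𝕜] (g : α → 𝕜) (σ : α → α) (ρ : α → 𝕜) (p : α) :
    𝕜 :=
  g p / (1 + g p * ρ (σ p))

section ContFracStep

variable {α 𝕜 : Type*} {S : Set α} {g : α → 𝕜} {σ : α → α} {ρ : α → 𝕜}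

theorem half_le_norm_one_add_mul [NormedField 𝕜] {M ε : ℝ} (hg : ∀ p ∈ S, ‖g p‖ ≤ ε)
    (hσ : MapsTo σ S S) (hεM : ε * M ≤ 1 / 2) (hρ : ∀ p ∈ S, ‖ρ p‖ ≤ M) {p : α} (hp : p ∈ S) :
    1 / 2 ≤ ‖1 + g p * ρ (σ p)‖ := by
  have hsmall : ‖g p * ρ (σ p)‖ ≤ 1 / 2 := by
    rw [norm_mul]
    exact (mul_le_mul (hg p hp) (hρ _ (hσ hp)) (norm_nonneg _)
      ((norm_nonneg _).trans (hg p hp))).trans hεM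
  have := norm_add_le (1 + g p * ρ (σ p)) (-(g p * ρ (σ p)))
  rw [add_neg_cancel_right, norm_neg, norm_one] at this
  linarith

theorem isBallContraction_contFracStep [NormedField 𝕜] {M ε : ℝ} (hg : ∀ p ∈ S, ‖g p‖ ≤ ε)
    (hσ : MapsTo σ S S) (hεM : ε * M ≤ 1 / 2) (h2ε : 2 * ε ≤ M) :
    IsBallContraction S M (4 * ε ^ 2) (contFracStep g σ) where
  norm_le ρ hρ p hp := by
    have hε : 0 ≤ ε := (norm_nonneg _).trans (hg p hp)
    calc ‖g p / (1 + g p * ρ (σ p))‖ = ‖g p‖ / ‖1 + g p * ρ (σ p)‖ := norm_div _ _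
      _ ≤ ε / (1 / 2) :=
          div_le_div₀ hε (hg p hp) one_half_pos (half_le_norm_one_add_mul hg hσ hεM hρ hp)
      _ ≤ M := by linarith
  norm_sub_le ρ₁ ρ₂ hρ₁ hρ₂ d hd p hp := by
    have hε : 0 ≤ ε := (norm_nonneg _).trans (hg p hp)
    have hD₁ := half_le_norm_one_add_mul hg hσ hεM hρ₁ hp
    have hD₂ := half_le_norm_one_add_mul hg hσ hεM hρ₂ hp
    have hd' : ‖ρ₂ (σ p) - ρ₁ (σ p)‖ ≤ d := norm_sub_rev (ρ₁ _) _ ▸ hd _ (hσ hp)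
    have hdiff : contFracStep g σ ρ₁ p - contFracStep g σ ρ₂ p =
        g p * g p * (ρ₂ (σ p) - ρ₁ (σ p)) / ((1 + g p * ρ₁ (σ p)) * (1 + g p * ρ₂ (σ p))) := by
      have h₁ : 1 + g p * ρ₁ (σ p) ≠ 0 := norm_pos_iff.1 (by linarith)
      have h₂ : 1 + g p * ρ₂ (σ p) ≠ 0 := norm_pos_iff.1 (by linarith)
      rw [contFracStep, contFracStep, div_sub_div _ _ h₁ h₂]
      ring
    rw [hdiff, norm_div, norm_mul, norm_mul, norm_mul]
    calc ‖g p‖ * ‖g p‖ * ‖ρ₂ (σ p) - ρ₁ (σ p)‖ /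
          (‖1 + g p * ρ₁ (σ p)‖ * ‖1 + g p * ρ₂ (σ p)‖)
        ≤ ε * ε * d / (1 / 2 * (1 / 2)) := by
          have hd₀ : 0 ≤ d := (norm_nonneg _).trans hd'
          gcongr ?_ * ?_ / ?_
          · exact mul_le_mul (hg p hp) (hg p hp) (norm_nonneg _) hε
          · exact mul_le_mul hD₁ hD₂ (by norm_num) (by positivity)
      _ = 4 * ε ^ 2 * d := by ring

theorem continuousOn_contFracStep [TopologicalSpace α] [NormedField 𝕜] (hgc : ContinuousOn g S)
    (hσc : ContinuousOn σ S) (hσ : MapsTo σ S S) (hρc : ContinuousOn ρ S)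
    (hne : ∀ p ∈ S, 1 + g p * ρ (σ p) ≠ 0) : ContinuousOn (contFracStep g σ ρ) S :=
  hgc.div (continuousOn_const.add (hgc.mul (hρc.comp hσc hσ))) hne

end ContFracStep

theorem analyticOnNhd_contFracStep {𝕜 : Type*} [NontriviallyNormedField 𝕜] {U : Set 𝕜}
    {g σ ρ : 𝕜 → 𝕜} (hga : AnalyticOnNhd 𝕜 g U) (hσa : AnalyticOnNhd 𝕜 σ U) (hσ : MapsTo σ U U)
    (hρa : AnalyticOnNhd 𝕜 ρ U) (hne : ∀ p ∈ U, 1 + g p * ρ (σ p) ≠ 0) :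
    AnalyticOnNhd 𝕜 (contFracStep g σ ρ) U := fun p hp =>
  (hga p hp).div (analyticAt_const.add ((hga p hp).mul (hρa.comp hσa hσ p hp))) (hne p hp)

def ContractsBallWithAnalyticFixedPoint (S U : Set ℂ) (M : ℝ) (T : (ℂ → ℂ) → ℂ → ℂ) : Prop :=
  (∀ ρ : ℂ → ℂ, ContinuousOn ρ S → (∀ p ∈ S, ‖ρ p‖ ≤ M) →
      ContinuousOn (T ρ) S ∧ ∀ p ∈ S, ‖T ρ p‖ ≤ M) ∧
    (∃ K : ℝ, 0 ≤ K ∧ K < 1 ∧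
      ∀ ρ₁ ρ₂ : ℂ → ℂ, ContinuousOn ρ₁ S → (∀ p ∈ S, ‖ρ₁ p‖ ≤ M) →
        ContinuousOn ρ₂ S → (∀ p ∈ S, ‖ρ₂ p‖ ≤ M) →
        ∀ d : ℝ, (∀ p ∈ S, ‖ρ₁ p - ρ₂ p‖ ≤ d) → ∀ p ∈ S, ‖T ρ₁ p - T ρ₂ p‖ ≤ K * d) ∧
    (∃ ρ : ℂ → ℂ, ContinuousOn ρ S ∧ (∀ p ∈ S, ‖ρ p‖ ≤ M) ∧ (∀ p ∈ S, ρ p = T ρ p) ∧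
      AnalyticOnNhd ℂ ρ U ∧
      ∀ ρ' : ℂ → ℂ, ContinuousOn ρ' S → (∀ p ∈ S, ‖ρ' p‖ ≤ M) →
        (∀ p ∈ S, ρ' p = T ρ' p) → ∀ p ∈ S, ρ' p = ρ p)

theorem contractsBallWithAnalyticFixedPoint_contFracStep {S U : Set ℂ} {g σ : ℂ → ℂ} {M ε : ℝ}
    (hU : IsOpen U) (hUS : U ⊆ S) (hgc : ContinuousOn g S) (hga : AnalyticOnNhd ℂ g U)
    (hg : ∀ p ∈ S, ‖g p‖ ≤ ε) (hσc : ContinuousOn σ S) (hσa : AnalyticOnNhd ℂ σ U)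
    (hσS : MapsTo σ S S) (hσU : MapsTo σ U U) (hε : 0 ≤ ε) (hεM : ε * M < 1 / 2)
    (h2ε : 2 * ε < M) :
    ContractsBallWithAnalyticFixedPoint S U M (contFracStep g σ) := by
  set T := contFracStep g σ
  have hT := isBallContraction_contFracStep hg hσS hεM.le h2ε.le
  have hK₀ : 0 ≤ 4 * ε ^ 2 := by positivity
  have hK₁ : 4 * ε ^ 2 < 1 := by nlinarith
  have hne : ∀ ρ : ℂ → ℂ, (∀ p ∈ S, ‖ρ p‖ ≤ M) → ∀ p ∈ S, 1 + g p * ρ (σ p) ≠ 0 :=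
    fun ρ hρ p hp =>
      norm_pos_iff.1 ((half_le_norm_one_add_mul hg hσS hεM.le hρ hp).trans_lt' one_half_pos)
  have hcont : ∀ ρ, ContinuousOn ρ S → (∀ p ∈ S, ‖ρ p‖ ≤ M) → ContinuousOn (T ρ) S :=
    fun ρ hρc hρ => continuousOn_contFracStep hgc hσc hσS hρc (hne ρ hρ)
  refine ⟨fun ρ hρc hρ => ⟨hcont ρ hρc hρ, hT.norm_le ρ hρ⟩,
    ⟨_, hK₀, hK₁, fun ρ₁ ρ₂ _ hρ₁ _ hρ₂ => hT.norm_sub_le ρ₁ ρ₂ hρ₁ hρ₂⟩, ?_⟩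
  have h0 : ∀ p ∈ S, ‖(0 : ℂ → ℂ) p‖ ≤ M := fun p _ => by
    rw [Pi.zero_apply, norm_zero]; linarith
  have hiter : ∀ n, ContinuousOn (T^[n] 0) S ∧ AnalyticOnNhd ℂ (T^[n] 0) U := by
    intro n
    induction n with
    | zero => exact ⟨continuousOn_const, fun _ _ => analyticAt_const⟩
    | succ n ih =>
      have hbd := hT.norm_iterate_le h0 n
      rw [Function.iterate_succ_apply']
      exact ⟨hcont _ ih.1 hbd, analyticOnNhd_contFracStep hga hσa hσU ih.2
        fun p hp => hne _ hbd p (hUS hp)⟩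
  obtain ⟨ρ, hlim⟩ := hT.exists_tendstoUniformlyOn_iterate hK₀ hK₁ h0
  have hρ := hT.norm_le_of_tendstoUniformlyOn h0 hlim
  have hfix := hT.fixed_of_tendstoUniformlyOn hK₁ h0 hlim
  have hdiff : DifferentiableOn ℂ ρ U :=
    (hlim.mono hUS).tendstoLocallyUniformlyOn.differentiableOn
      (Eventually.of_forall fun n => (hiter n).2.differentiableOn) hU
  exact ⟨ρ, hlim.continuousOn (Eventually.of_forall fun n => (hiter n).1).frequently, hρ,
    fun p hp => (hfix p hp).symm, hdiff.analyticOnNhd hU, fun ρ' _ hρ' hfix' =>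
      hT.eqOn_of_fixed hK₀ hK₁ hρ' hρ (fun p hp => (hfix' p hp).symm) hfix⟩

theorem one_le_norm_log_add {p w : ℂ} (hp : Real.exp (1 + ‖w‖) ≤ ‖p‖) :
    1 ≤ ‖log p + w‖ := by
  have hlog : 1 + ‖w‖ ≤ Real.log ‖p‖ :=
    (Real.le_log_iff_exp_le ((Real.exp_pos _).trans_le hp)).2 hp
  calc 1 ≤ (log p).re - ‖-w‖ := by rw [log_re, norm_neg]; linarith
    _ ≤ ‖log p‖ - ‖-w‖ := by linarith [re_le_norm (log p)]
    _ ≤ ‖log p + w‖ := by simpa using norm_sub_norm_le (log p) (-w)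

noncomputable def hfunRadius : ℝ := Real.exp (1 + ‖4 * (Real.pi : ℂ) * beta0‖)

theorem norm_hfun_le {p : ℂ} (hp : hfunRadius ≤ ‖p‖) : ‖hfun p‖ ≤ 2 * Real.pi := by
  have hnum : ‖2 * (Real.pi : ℂ) * I‖ = 2 * Real.pi := by
    simp [Real.pi_pos.le, abs_of_nonneg]
  rw [hfun, norm_div, hnum]
  exact div_le_self (by positivity) (one_le_norm_log_add hp)

theorem analyticAt_hfun {p : ℂ} (hp : hfunRadius ≤ |p.im|) : AnalyticAt ℂ hfun p := by
  have him : p.im ≠ 0 := abs_pos.1 ((Real.exp_pos _).trans_le hp)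
  have hden : log p + 4 * (Real.pi : ℂ) * beta0 ≠ 0 := norm_pos_iff.1
    (one_pos.trans_le (one_le_norm_log_add (hp.trans (abs_im_le_norm p))))
  exact analyticAt_const.div
    ((analyticAt_clog (mem_slitPlane_iff.2 (Or.inr him))).add analyticAt_const) hden

theorem contractsBallWithAnalyticFixedPoint_Nmap {α₀ ω M : ℝ} (hω : 0 ≤ ω)
    (hεM : |α₀| * (2 * Real.pi) * M < 1 / 2) (h2ε : 2 * (|α₀| * (2 * Real.pi)) < M) :
    ContractsBallWithAnalyticFixedPoint (Jset hfunRadius)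
      {p : ℂ | hfunRadius < p.im ∧ p.re ∈ Ioo 0 1} M (Nmap α₀ ω) := by
  have hJ : ∀ p ∈ Jset hfunRadius, hfunRadius ≤ |p.im| := fun p hp => hp.1.trans (le_abs_self _)
  have hga : ∀ p ∈ Jset hfunRadius, AnalyticAt ℂ (fun p => α₀ * hfun p) p :=
    fun p hp => analyticAt_const.mul (analyticAt_hfun (hJ p hp))
  refine contractsBallWithAnalyticFixedPoint_contFracStep
    ((isOpen_lt continuous_const continuous_im).inter (isOpen_Ioo.preimage continuous_re))
    (fun p hp => ⟨hp.1.le, Ioo_subset_Icc_self hp.2⟩)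
    (fun p hp => (hga p hp).continuousAt.continuousWithinAt)
    (fun p hp => hga p ⟨hp.1.le, Ioo_subset_Icc_self hp.2⟩)
    (fun p hp => ?_) (continuous_add_const _).continuousOn (fun _ _ => by fun_prop) ?_ ?_
    (by positivity) hεM h2ε
  · rw [norm_mul, norm_real, Real.norm_eq_abs]
    exact mul_le_mul_of_nonneg_left (norm_hfun_le ((hJ p hp).trans (abs_im_le_norm p)))
      (abs_nonneg _)
  · rintro p ⟨him, hre⟩
    exact ⟨by simpa using by linarith, by simpa using hre⟩
  · rintro p ⟨him, hre⟩
    exact ⟨by simpa using by linarith, by simpa using hre⟩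

theorem Mmap_eq_contFracStep (α₀ ω : ℝ) :
    Mmap α₀ ω = contFracStep (fun p => -(α₀ * hfun (p - I * ω))) (· - I * ω) := by
  ext Ω p
  simp only [Mmap, contFracStep]
  ring

theorem contractsBallWithAnalyticFixedPoint_Mmap {α₀ ω M : ℝ} (hω : 0 ≤ ω)
    (hεM : |α₀| * (2 * Real.pi) * M < 1 / 2) (h2ε : 2 * (|α₀| * (2 * Real.pi)) < M) :
    ContractsBallWithAnalyticFixedPoint (Kset hfunRadius)
      {p : ℂ | p.im < -hfunRadius ∧ p.re ∈ Ioo 0 1} M (Mmap α₀ ω) := by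
  have hK : ∀ p ∈ Kset hfunRadius, hfunRadius ≤ |(p - I * ω).im| := fun p hp => by
    have : (p - I * ω).im = p.im - ω := by simp
    rw [this]
    exact (neg_le_abs _).trans' (by linarith [hp.1])
  have hga : ∀ p ∈ Kset hfunRadius, AnalyticAt ℂ (fun p => -(α₀ * hfun (p - I * ω))) p :=
    fun p hp => by
      have := analyticAt_hfun (hK p hp)
      fun_prop
  rw [Mmap_eq_contFracStep]
  refine contractsBallWithAnalyticFixedPoint_contFracStep
    ((isOpen_gt' _ |>.preimage continuous_im).inter (isOpen_Ioo.preimage continuous_re))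
    (fun p hp => ⟨hp.1.le, Ioo_subset_Icc_self hp.2⟩)
    (fun p hp => (hga p hp).continuousAt.continuousWithinAt)
    (fun p hp => hga p ⟨hp.1.le, Ioo_subset_Icc_self hp.2⟩)
    (fun p hp => ?_) (continuous_sub_right _).continuousOn (fun _ _ => by fun_prop) ?_ ?_
    (by positivity) hεM h2ε
  · rw [norm_neg, norm_mul, norm_real, Real.norm_eq_abs]
    exact mul_le_mul_of_nonneg_left (norm_hfun_le ((hK p hp).trans (abs_im_le_norm _)))
      (abs_nonneg _)
  · rintro p ⟨him, hre⟩
    exact ⟨by simpa using by linarith, by simpa using hre⟩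
  · rintro p ⟨him, hre⟩
    exact ⟨by simpa using by linarith, by simpa using hre⟩

theorem contraction_continued_fraction_maps (ω M : ℝ) (hω : 0 < ω) (hM : 0 < M) :
    ∃ A₀ : ℝ, 0 < A₀ ∧ ∃ r₁ : ℝ, 0 < r₁ ∧ ∃ r₂ : ℝ, 0 < r₂ ∧
      ∀ α₀ : ℝ, 0 < |α₀| → |α₀| < A₀ →
        -- (i) the map 𝓝 on the ball of radius M of C(J_{r₁})
        ((∀ ρ : ℂ → ℂ, ContinuousOn ρ (Jset r₁) →
            (∀ p ∈ Jset r₁, ‖ρ p‖ ≤ M) →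
            ContinuousOn (Nmap α₀ ω ρ) (Jset r₁) ∧
              ∀ p ∈ Jset r₁, ‖Nmap α₀ ω ρ p‖ ≤ M) ∧
          (∃ K : ℝ, 0 ≤ K ∧ K < 1 ∧
            ∀ ρ₁ ρ₂ : ℂ → ℂ, ContinuousOn ρ₁ (Jset r₁) →
              (∀ p ∈ Jset r₁, ‖ρ₁ p‖ ≤ M) →
              ContinuousOn ρ₂ (Jset r₁) →
              (∀ p ∈ Jset r₁, ‖ρ₂ p‖ ≤ M) →
              ∀ d : ℝ, (∀ p ∈ Jset r₁, ‖ρ₁ p - ρ₂ p‖ ≤ d) →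
                ∀ p ∈ Jset r₁, ‖Nmap α₀ ω ρ₁ p - Nmap α₀ ω ρ₂ p‖ ≤ K * d) ∧
          (∃ ρ : ℂ → ℂ, ContinuousOn ρ (Jset r₁) ∧
            (∀ p ∈ Jset r₁, ‖ρ p‖ ≤ M) ∧
            (∀ p ∈ Jset r₁, ρ p = Nmap α₀ ω ρ p) ∧
            AnalyticOnNhd ℂ ρ {p : ℂ | r₁ < p.im ∧ p.re ∈ Set.Ioo 0 1} ∧
            ∀ ρ' : ℂ → ℂ, ContinuousOn ρ' (Jset r₁) →
              (∀ p ∈ Jset r₁, ‖ρ' p‖ ≤ M) →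
              (∀ p ∈ Jset r₁, ρ' p = Nmap α₀ ω ρ' p) →
              ∀ p ∈ Jset r₁, ρ' p = ρ p)) ∧
        -- (ii) the map 𝓜 on the ball of radius M of C(K_{r₂})
        ((∀ Ω : ℂ → ℂ, ContinuousOn Ω (Kset r₂) →
            (∀ p ∈ Kset r₂, ‖Ω p‖ ≤ M) →
            ContinuousOn (Mmap α₀ ω Ω) (Kset r₂) ∧
              ∀ p ∈ Kset r₂, ‖Mmap α₀ ω Ω p‖ ≤ M) ∧
          (∃ K : ℝ, 0 ≤ K ∧ K < 1 ∧
            ∀ Ω₁ Ω₂ : ℂ → ℂ, ContinuousOn Ω₁ (Kset r₂) →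
              (∀ p ∈ Kset r₂, ‖Ω₁ p‖ ≤ M) →
              ContinuousOn Ω₂ (Kset r₂) →
              (∀ p ∈ Kset r₂, ‖Ω₂ p‖ ≤ M) →
              ∀ d : ℝ, (∀ p ∈ Kset r₂, ‖Ω₁ p - Ω₂ p‖ ≤ d) →
                ∀ p ∈ Kset r₂, ‖Mmap α₀ ω Ω₁ p - Mmap α₀ ω Ω₂ p‖ ≤ K * d) ∧
          (∃ Ω : ℂ → ℂ, ContinuousOn Ω (Kset r₂) ∧
            (∀ p ∈ Kset r₂, ‖Ω p‖ ≤ M) ∧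
            (∀ p ∈ Kset r₂, Ω p = Mmap α₀ ω Ω p) ∧
            AnalyticOnNhd ℂ Ω {p : ℂ | p.im < -r₂ ∧ p.re ∈ Set.Ioo 0 1} ∧
            ∀ Ω' : ℂ → ℂ, ContinuousOn Ω' (Kset r₂) →
              (∀ p ∈ Kset r₂, ‖Ω' p‖ ≤ M) →
              (∀ p ∈ Kset r₂, Ω' p = Mmap α₀ ω Ω' p) →
              ∀ p ∈ Kset r₂, Ω' p = Ω p)) := by
  have hπ := Real.pi_pos
  refine ⟨min (1 / (4 * Real.pi * M)) (M / (4 * Real.pi)), lt_min (by positivity) (by positivity),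
    hfunRadius, Real.exp_pos _, hfunRadius, Real.exp_pos _, fun α₀ _ hα => ?_⟩
  have hεM : |α₀| * (2 * Real.pi) * M < 1 / 2 := by
    have := (lt_div_iff₀ (by positivity)).1 (hα.trans_le (min_le_left _ _))
    linarith
  have h2ε : 2 * (|α₀| * (2 * Real.pi)) < M := by
    have := (lt_div_iff₀ (by positivity)).1 (hα.trans_le (min_le_right _ _))
    linarith
  exact ⟨contractsBallWithAnalyticFixedPoint_Nmap hω.le hεM h2ε,
    contractsBallWithAnalyticFixedPoint_Mmap hω.le hεM h2ε⟩
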